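/- For every partial computable function f : ℕ → ℕ there exists a constant c_f such that α(α(f(n))) ≤ α(n) + c_f for all n in the domain of f, where α(n) = min{K(i) : i > n}. -/

import Mathlib

open Set Filter

namespace KC

/-- Length of the binary string identified with the natural number `n`. -/
def len (n : ℕ) : ℕ := Nat.log 2 (n + 1)

/-- Complexity of `x` relative to machine `T`. -/
noncomputable def MachineCplx (T : ℕ →. ℕ) (x : ℕ) : ℕ := sInf {n | ∃ y, len y = n ∧ x ∈ T y}

/-- `U` is an optimal machine. -/
def Optimal (U : ℕ →. ℕ) : Prop :=
  Partrec U ∧ ∀ T : ℕ →. ℕ, Partrec T → ∃ c, ∀ x y, x ∈ T y → MachineCplx U x ≤ len y + c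

/-- Conditional complexity of `x` given `y` relative to machine `T`. -/
noncomputable def CondCplx (T : ℕ →. ℕ) (x y : ℕ) : ℕ :=
  sInf {n | ∃ z, len z = n ∧ x ∈ T (Nat.pair z y)}

/-- `U` is optimal as a conditional machine. -/
def CondOptimal (U : ℕ →. ℕ) : Prop :=
  Partrec U ∧ ∀ T : ℕ →. ℕ, Partrec T →
    ∃ c, ∀ x y z, x ∈ T (Nat.pair z y) → CondCplx U x y ≤ len z + c

/-- `y` is a prefix of `z` (as binary strings identified with naturals). -/
def IsPrefix (y z : ℕ) : Prop := ∃ k, (y + 1) * 2 ^ k ≤ z + 1 ∧ z + 1 < (y + 2) * 2 ^ k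

/-- A machine with prefix-free domain. -/
def PrefixFree (T : ℕ →. ℕ) : Prop :=
  ∀ y z, (T y).Dom → (T z).Dom → IsPrefix y z → y = z

/-- `U` is an optimal prefix-free machine. -/
def PrefixOptimal (U : ℕ →. ℕ) : Prop :=
  Partrec U ∧ PrefixFree U ∧ ∀ T : ℕ →. ℕ, Partrec T → PrefixFree T →
    ∃ c, ∀ x y, x ∈ T y → MachineCplx U x ≤ len y + c

/-- Upper semicomputability: `A` is a pointwise limit of a computable
nonincreasing sequence of approximations. -/
def UpperSemicomputable (A : ℕ → ℕ) : Prop :=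
  ∃ F : ℕ → ℕ → ℕ, Computable₂ F ∧ (∀ x, Antitone (F x)) ∧ ∀ x, A x = ⨅ s, F x s

/-- Uniform upper semicomputability for a two-argument function. -/
def UpperSemicomputable₂ (B : ℕ → ℕ → ℕ) : Prop :=
  UpperSemicomputable (fun p => B (Nat.unpair p).1 (Nat.unpair p).2)

/-- Solovay's function `α` built from a complexity function `K`. -/
noncomputable def solovay (K : ℕ → ℕ) (n : ℕ) : ℕ := sInf {m | ∃ i, n < i ∧ K i = m}

/-- An order: total, non-decreasing, unbounded. -/
def IsOrder (h : ℕ → ℕ) : Prop := Monotone h ∧ ∀ m, ∃ n, m ≤ h n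

/-- Sub-linearity: `f n = o(n)`. -/
def Sublinear (f : ℕ → ℕ) : Prop :=
  Tendsto (fun n => (f n : ℝ) / n) atTop (nhds 0)

/-- `p_f = max {n | f n ≥ n}`. -/
noncomputable def pstar (f : ℕ → ℕ) : ℕ := sSup {n | n ≤ f n}

/-- The star-operator: `f* n = min {k | f^[k] n ≤ p_f}`. -/
noncomputable def starOp (f : ℕ → ℕ) (n : ℕ) : ℕ := sInf {k | f^[k] n ≤ pstar f}

end KC

open KC

/-!
Running `f` on the prefix-free unary code of `n`, a string of length `n + 1`, shows
`K (f n + 1) ≤ n + O(1)`, hence `α (f n) ≤ n + O(1)`. Take `i > n` with `K i = α n`; then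
`α (f n) < i + d` for a constant `d`, and the machine adding `d` to the outputs of `U` gives
`K (i + d) ≤ K i + O(1)`, so `α (α (f n)) ≤ K (i + d) ≤ α n + O(1)`.
This needs `i` to have a program (otherwise `K i = 0` is a junk value): either cofinitely many
numbers have programs, and `i` is taken beyond them at the cost of `α N` for a fixed `N`, or `K`
vanishes cofinally and `α ≡ 0`.
-/

namespace KC

/-- The binary string `1ⁿ0`: its successor `2 ^ (n + 2) - 2` is written `1ⁿ⁺¹0` in binary. -/
def unaryCode (n : ℕ) : ℕ := 2 ^ (n + 2) - 3

lemma four_le_two_pow_add_two (n : ℕ) : 4 ≤ 2 ^ (n + 2) :=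
  Nat.pow_le_pow_right (n := 2) (by norm_num) (by omega : 2 ≤ n + 2)

lemma len_unaryCode (n : ℕ) : len (unaryCode n) = n + 1 := by
  have h4 := four_le_two_pow_add_two n
  have hdouble : 2 ^ (n + 2) = 2 * 2 ^ (n + 1) := by ring
  refine Nat.log_eq_of_pow_le_of_lt_pow ?_ ?_ <;> unfold unaryCode <;> omega

lemma unaryCode_injective : Function.Injective unaryCode := by
  intro a b h
  have := four_le_two_pow_add_two a
  have := four_le_two_pow_add_two b
  have hpow : 2 ^ (a + 2) = 2 ^ (b + 2) := by unfold unaryCode at h; omega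
  simpa using Nat.pow_right_injective le_rfl hpow

lemma eq_of_isPrefix_unaryCode {a b : ℕ} (h : IsPrefix (unaryCode a) (unaryCode b)) : a = b := by
  obtain ⟨k, hlo, hhi⟩ := h
  obtain ⟨p, hp⟩ : ∃ p, 2 ^ (a + 2) = p + 4 :=
    ⟨_, (Nat.sub_add_cancel (four_le_two_pow_add_two a)).symm⟩
  obtain ⟨q, hq⟩ : ∃ q, 2 ^ (b + 2) = q + 4 :=
    ⟨_, (Nat.sub_add_cancel (four_le_two_pow_add_two b)).symm⟩
  simp only [unaryCode, hp, hq, show ∀ m, m + 4 - 3 = m + 1 from fun m => by omega] at hlo hhi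
  rcases Nat.eq_zero_or_pos k with rfl | hk
  · have hpq : 2 ^ (a + 2) = 2 ^ (b + 2) := by simp only [pow_zero, mul_one] at hlo hhi; omega
    simpa using Nat.pow_right_injective le_rfl hpq
  · -- a proper extension would put the power `2 ^ (a + 2 + k)` strictly between `2 ^ (b + 2)` and
    -- `2 ^ (b + 3)`
    have hK : 2 ≤ 2 ^ k := Nat.le_self_pow hk.ne' 2
    have hlt : 2 ^ (b + 2) < 2 ^ (a + 2 + k) := by
      rw [pow_add 2 (a + 2) k, hp, hq]; nlinarith
    have hgt : 2 ^ (a + 2 + k) < 2 ^ (b + 2 + 1) := by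
      rw [pow_add 2 (a + 2) k, pow_succ 2 (b + 2), hp, hq]; nlinarith
    have := (Nat.pow_lt_pow_iff_right (by norm_num)).mp hlt
    have := (Nat.pow_lt_pow_iff_right (by norm_num)).mp hgt
    omega

lemma primrec_unaryCode : Primrec unaryCode := by
  have hpow : Primrec (Nat.unpaired (· ^ ·)) := Primrec.nat_iff.2 Nat.Primrec.pow
  have htwoPow : Primrec fun n => 2 ^ (n + 2) :=
    (hpow.comp (Primrec₂.natPair.comp (Primrec.const 2)
      (Primrec.succ.comp Primrec.succ))).of_eq fun n => by simp [Nat.unpaired]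
  exact Primrec.nat_sub.comp htwoPow (Primrec.const 3)

/-- The machine that decodes its input `1ⁿ0` by unbounded search and then runs `g n`. -/
def unaryMachine (g : ℕ →. ℕ) : ℕ →. ℕ := fun z =>
  (Nat.rfind fun n => Part.some (decide (unaryCode n = z))).bind g

lemma mem_unaryMachine {g : ℕ →. ℕ} {n m : ℕ} (h : m ∈ g n) :
    m ∈ unaryMachine g (unaryCode n) := by
  refine Part.mem_bind_iff.mpr ⟨n, Nat.mem_rfind.mpr ⟨by simp, fun hn' => ?_⟩, h⟩
  simpa using unaryCode_injective.ne hn'.ne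

lemma exists_unaryCode_eq_of_dom {g : ℕ →. ℕ} {z : ℕ} (h : (unaryMachine g z).Dom) :
    ∃ n, unaryCode n = z := by
  obtain ⟨hd, -⟩ := Part.bind_dom.mp h
  exact ⟨_, of_decide_eq_true (Part.mem_some_iff.mp (Nat.rfind_spec (Part.get_mem hd))).symm⟩

lemma prefixFree_unaryMachine (g : ℕ →. ℕ) : PrefixFree (unaryMachine g) := by
  intro y z hy hz hyz
  obtain ⟨a, rfl⟩ := exists_unaryCode_eq_of_dom hy
  obtain ⟨b, rfl⟩ := exists_unaryCode_eq_of_dom hz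
  rw [eq_of_isPrefix_unaryCode hyz]

lemma partrec_unaryMachine {g : ℕ →. ℕ} (hg : Partrec g) : Partrec (unaryMachine g) := by
  have hcode : Computable₂ fun z n : ℕ => decide (unaryCode n = z) :=
    (Primrec.eq.comp (primrec_unaryCode.comp Primrec.snd) Primrec.fst).decide.to_comp
  exact (Partrec.rfind hcode.partrec₂).bind (hg.comp Computable.snd).to₂

lemma machineCplx_eq_zero {T : ℕ →. ℕ} {x : ℕ} (h : ¬∃ y, x ∈ T y) : MachineCplx T x = 0 :=
  Nat.sInf_eq_zero.mpr <| .inr <| Set.eq_empty_of_forall_notMem fun _ ⟨y, _, hy⟩ => h ⟨y, hy⟩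

lemma exists_len_eq_machineCplx {T : ℕ →. ℕ} {x : ℕ} (h : ∃ y, x ∈ T y) :
    ∃ y, len y = MachineCplx T x ∧ x ∈ T y :=
  Nat.sInf_mem (s := {n | ∃ y, len y = n ∧ x ∈ T y}) (let ⟨y, hy⟩ := h; ⟨len y, y, rfl, hy⟩)

theorem PrefixOptimal.machineCplx_le_of_partrec {U g : ℕ →. ℕ} (hU : PrefixOptimal U)
    (hg : Partrec g) : ∃ c, ∀ n m, m ∈ g n → MachineCplx U m ≤ n + c := by
  obtain ⟨c, hc⟩ := hU.2.2 _ (partrec_unaryMachine hg) (prefixFree_unaryMachine g)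
  refine ⟨c + 1, fun n m hm => ?_⟩
  have := hc m _ (mem_unaryMachine hm)
  rw [len_unaryCode] at this
  omega

theorem PrefixOptimal.machineCplx_add_le {U : ℕ →. ℕ} (hU : PrefixOptimal U) (d : ℕ) :
    ∃ c, ∀ x, (∃ y, x ∈ U y) → MachineCplx U (x + d) ≤ MachineCplx U x + c := by
  obtain ⟨c, hc⟩ := hU.2.2 (fun y => (U y).map (· + d))
    (hU.1.map (Primrec.nat_add.comp Primrec.snd (Primrec.const d)).to_comp.to₂)
    (fun y z hy hz => hU.2.1 y z hy hz)
  refine ⟨c, fun x hx => ?_⟩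
  obtain ⟨y, hlen, hy⟩ := exists_len_eq_machineCplx hx
  exact hlen ▸ hc _ y (Part.mem_map _ hy)

section Solovay

variable (K : ℕ → ℕ)

lemma solovay_le {n i : ℕ} (h : n < i) : solovay K n ≤ K i := Nat.sInf_le ⟨i, h, rfl⟩

lemma exists_solovay_eq (n : ℕ) : ∃ i, n < i ∧ K i = solovay K n :=
  Nat.sInf_mem (s := {m | ∃ i, n < i ∧ K i = m}) ⟨K (n + 1), n + 1, n.lt_succ_self, rfl⟩

lemma solovay_monotone : Monotone (solovay K) := fun n n' h => by
  obtain ⟨i, hi, hKi⟩ := exists_solovay_eq K n'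
  exact hKi ▸ solovay_le K (h.trans_lt hi)

lemma solovay_eq_zero_of_frequently (h : ∃ᶠ x in atTop, K x = 0) (n : ℕ) : solovay K n = 0 := by
  obtain ⟨x, hx, hKx⟩ := frequently_atTop.mp h (n + 1)
  exact Nat.eq_zero_of_le_zero (hKx ▸ solovay_le K hx)

end Solovay

end KC

/-- For partial computable `f`, `α(α(f n)) ≤ α(n) + O(1)`. -/
theorem solovay_double_partial (U' : ℕ →. ℕ) (hU' : PrefixOptimal U') :
    ∀ f : ℕ →. ℕ, Partrec f →
      ∃ c, ∀ n m, m ∈ f n →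
        solovay (MachineCplx U') (solovay (MachineCplx U') m) ≤
          solovay (MachineCplx U') n + c := by
  intro f hf
  set K := MachineCplx U'
  obtain ⟨c₁, hc₁⟩ :=
    hU'.machineCplx_le_of_partrec (hf.map (Computable.succ.comp Computable.snd).to₂)
  obtain ⟨c₂, hc₂⟩ := hU'.machineCplx_add_le (c₁ + 1)
  by_cases hdom : ∀ᶠ x in atTop, ∃ y, x ∈ U' y
  · obtain ⟨N, hN⟩ := eventually_atTop.mp hdom
    refine ⟨solovay K N + c₂, fun n m hm => ?_⟩
    obtain ⟨i, hi, hKi⟩ := exists_solovay_eq K (max n N)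
    have hαm : solovay K m < i + (c₁ + 1) :=
      calc solovay K m ≤ K (m + 1) := solovay_le K m.lt_succ_self
        _ ≤ n + c₁ := hc₁ n (m + 1) (Part.mem_map _ hm)
        _ < i + (c₁ + 1) := by omega
    calc solovay K (solovay K m) ≤ K (i + (c₁ + 1)) := solovay_le K hαm
      _ ≤ K i + c₂ := hc₂ i (hN i (by omega))
      _ = max (solovay K n) (solovay K N) + c₂ := by rw [hKi, (solovay_monotone K).map_max]
      _ ≤ solovay K n + (solovay K N + c₂) := by omega
  · have hα : ∀ n, solovay K n = 0 := solovay_eq_zero_of_frequently K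
      ((not_eventually.mp hdom).mono fun x hx => machineCplx_eq_zero hx)
    exact ⟨0, fun n m _ => by simp only [hα, le_refl]⟩
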